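/- arXiv:2207.05922 — 4 statements merged into one kernel-verified Lean document; each statement's English description precedes it below -/
import Mathlib

section
/- For positive semidefinite symmetric real n×n matrices S and T, the trace of S·T is bounded below by the sum over i of λ_i(S)·λ_{n-i+1}(T), where λ_1 ≥ λ_2 ≥ ... ≥ λ_n denote the eigenvalues in decreasing order. -/
/-!
With `Q = Uᵀ V`, cyclicity of the trace gives `tr (S T) = ∑ i j, μ i * ν j * (Q i j)²`, and the
matrix `(Q i j)²` is doubly stochastic because `Q` is orthogonal. A linear function on the
doubly stochastic matrices is bounded below by its minimum over the permutation matrices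
(Birkhoff), and on the permutation matrix of `σ` it takes the value `∑ i, μ i * ν (σ i)`, which the
rearrangement inequality bounds below by the oppositely ordered pairing `∑ i, μ i * ν (rev i)`.
-/

open Matrix

theorem trace_diagonal_mul_mul_diagonal_mul_transpose {n R : Type*} [Fintype n] [DecidableEq n]
    [CommSemiring R] (μ ν : n → R) (Q : Matrix n n R) :
    (diagonal μ * Q * diagonal ν * Qᵀ).trace = μ ⬝ᵥ ((Q ⊙ Q) *ᵥ ν) := by
  simp only [trace, diag, mul_apply, diagonal_apply, transpose_apply, dotProduct, mulVec,
    hadamard_apply, Finset.mul_sum, ite_mul, zero_mul, mul_ite, mul_zero, Finset.sum_ite_eq',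
    Finset.sum_ite_eq, Finset.mem_univ, if_true]
  exact Fintype.sum_congr _ _ fun i => Fintype.sum_congr _ _ fun j => by ring

section

variable {R : Type*} [Field R] [LinearOrder R] [IsStrictOrderedRing R]

theorem le_dotProduct_mulVec_of_mem_doublyStochastic {n : Type*} [Fintype n] [DecidableEq n]
    {μ ν : n → R} {c : R} (hperm : ∀ σ : Equiv.Perm n, c ≤ μ ⬝ᵥ (ν ∘ σ))
    {D : Matrix n n R} (hD : D ∈ doublyStochastic R n) : c ≤ μ ⬝ᵥ (D *ᵥ ν) := by
  have hlin : IsLinearMap R fun M : Matrix n n R => μ ⬝ᵥ (M *ᵥ ν) :=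
    ⟨fun M N => by simp [add_mulVec], fun r M => by simp [smul_mulVec]⟩
  rw [← SetLike.mem_coe, doublyStochastic_eq_convexHull_permMatrix] at hD
  refine convexHull_min ?_ (convex_halfSpace_ge hlin c) hD
  rintro _ ⟨σ, rfl⟩
  simpa [permMatrix_mulVec] using hperm σ

theorem Fin.dotProduct_comp_rev_le_dotProduct_comp_perm {n : ℕ} {μ ν : Fin n → R}
    (hμ : Antitone μ) (hν : Antitone ν) (σ : Equiv.Perm (Fin n)) :
    μ ⬝ᵥ (ν ∘ Fin.rev) ≤ μ ⬝ᵥ (ν ∘ σ) := by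
  have h := (hμ.antivary (hν.comp Fin.rev_anti)).sum_mul_le_sum_mul_comp_perm
    (σ := σ.trans Fin.revPerm)
  simpa [dotProduct] using h

theorem hadamard_self_mem_doublyStochastic {n : Type*} [Fintype n] [DecidableEq n]
    {Q : Matrix n n R} (hQ : Qᵀ * Q = 1) : Q ⊙ Q ∈ doublyStochastic R n := by
  have hQ' : Q * Qᵀ = 1 := mul_eq_one_comm.mp hQ
  refine mem_doublyStochastic_iff_sum.mpr ⟨fun i j => mul_self_nonneg (Q i j), fun i => ?_,
    fun j => ?_⟩
  · simpa [mul_apply] using congrFun (congrFun hQ' i) i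
  · simpa [mul_apply] using congrFun (congrFun hQ j) j

end

theorem stmt1_general {n : ℕ} (S T : Matrix (Fin n) (Fin n) ℝ)
    (μ ν : Fin n → ℝ) (U V : Matrix (Fin n) (Fin n) ℝ)
    (hU : Uᵀ * U = 1) (hV : Vᵀ * V = 1)
    (hμ : Antitone μ) (hν : Antitone ν)
    (hSU : S = U * Matrix.diagonal μ * Uᵀ)
    (hTV : T = V * Matrix.diagonal ν * Vᵀ) :
    ∑ i : Fin n, μ i * ν (Fin.rev i) ≤ (S * T).trace := by
  set Q := Uᵀ * V
  have hQ : Qᵀ * Q = 1 := by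
    rw [transpose_mul, transpose_transpose, Matrix.mul_assoc, ← Matrix.mul_assoc U,
      mul_eq_one_comm.mp hU, Matrix.one_mul, hV]
  have htrace : (S * T).trace = (diagonal μ * Q * diagonal ν * Qᵀ).trace := by
    rw [hSU, hTV, show U * diagonal μ * Uᵀ * (V * diagonal ν * Vᵀ)
      = U * (diagonal μ * Q * diagonal ν * Vᵀ) by simp only [Q, Matrix.mul_assoc],
      trace_mul_comm]
    simp only [Q, transpose_mul, transpose_transpose, Matrix.mul_assoc]
  rw [htrace, trace_diagonal_mul_mul_diagonal_mul_transpose]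
  exact le_dotProduct_mulVec_of_mem_doublyStochastic
    (Fin.dotProduct_comp_rev_le_dotProduct_comp_perm hμ hν) (hadamard_self_mem_doublyStochastic hQ)

/-- For positive semidefinite symmetric matrices `S`, `T` with eigenvalues listed in
decreasing order as `μ`, `ν` (via orthogonal diagonalizations), the trace of `S * T`
is at least `∑ i, μ i * ν (rev i)`. -/
theorem stmt1 {n : ℕ} (S T : Matrix (Fin n) (Fin n) ℝ)
    (hS : S.PosSemidef) (hT : T.PosSemidef)
    (μ ν : Fin n → ℝ) (U V : Matrix (Fin n) (Fin n) ℝ)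
    (hU : Uᵀ * U = 1) (hV : Vᵀ * V = 1)
    (hμ : Antitone μ) (hν : Antitone ν)
    (hSU : S = U * Matrix.diagonal μ * Uᵀ)
    (hTV : T = V * Matrix.diagonal ν * Vᵀ) :
    ∑ i : Fin n, μ i * ν (Fin.rev i) ≤ (S * T).trace :=
  stmt1_general S T μ ν U V hU hV hμ hν hSU hTV
end

section
/- Let P be symmetric positive definite, γ > 0, and let (F_t)_{t≥0} be a sequence of ñ×ñ real matrices such that for all t, P ⪰ F_tᵀ P F_t + γ I. Define the products G_t := F_t F_{t-1} ⋯ F_0. Then P ⪰ G_tᵀ P G_t + γ (I + ∑_{s=0}^{t-1} G_sᵀ G_s) for all t ≥ 1; consequently ∑_{s=0}^{∞} G_sᵀ G_s is bounded above in the Loewner order (by γ^{-1} P), and therefore G_tᵀ G_t → 0 as t → ∞, i.e., G_t x₀ → 0 for every x₀. -/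
/-!
Conjugating the Lyapunov inequality `P ⪰ F_{t+1}ᵀ P F_{t+1} + γ I` by `G_t` gives
`G_tᵀ P G_t ⪰ G_{t+1}ᵀ P G_{t+1} + γ G_tᵀ G_t`, so the decrease of `G_tᵀ P G_t` pays for each new
term of `γ ∑ G_sᵀ G_s`; an induction telescopes this into the first claim. Dropping the
nonnegative `G_tᵀ P G_t + γ I` bounds the partial sums by `γ⁻¹ P`, so the traces `‖G_t‖²_F` of
`G_tᵀ G_t` are summable and tend to `0`, which forces `G_t → 0` entrywise.
-/

open Matrix Filter Topology Finset
open scoped MatrixOrder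

section StarOrderedAlgebra

variable {A : Type*} [Ring A] [StarRing A] [PartialOrder A] [StarOrderedRing A] [Algebra ℝ A]
  {p : A} {γ : ℝ}

theorem star_mul_mul_add_smul_one_add_sum_le {f g : ℕ → A}
    (hf : ∀ t, star (f t) * p * f t + γ • 1 ≤ p) (hg₀ : g 0 = f 0)
    (hg : ∀ t, g (t + 1) = f (t + 1) * g t) (t : ℕ) :
    star (g t) * p * g t + γ • (1 + ∑ s ∈ range t, star (g s) * g s) ≤ p := by
  induction t with
  | zero => simpa [hg₀] using hf 0
  | succ t ih =>
    calc star (g (t + 1)) * p * g (t + 1) + γ • (1 + ∑ s ∈ range (t + 1), star (g s) * g s)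
        = star (g t) * (star (f (t + 1)) * p * f (t + 1) + γ • 1) * g t
            + γ • (1 + ∑ s ∈ range t, star (g s) * g s) := by
          simp only [hg, star_mul, sum_range_succ, mul_add, add_mul, smul_add, mul_smul_comm,
            smul_mul_assoc, mul_one, mul_assoc]
          abel
      _ ≤ star (g t) * p * g t + γ • (1 + ∑ s ∈ range t, star (g s) * g s) :=
          add_le_add_left (star_left_conjugate_le_conjugate (hf (t + 1)) _) _
      _ ≤ p := ih

theorem le_inv_smul_of_star_mul_mul_add_smul_one_add_le [PosSMulMono ℝ A] [PosSMulReflectLE ℝ A]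
    (hp : 0 ≤ p) (hγ : 0 < γ) {a s : A} (h : star a * p * a + γ • (1 + s) ≤ p) :
    s ≤ γ⁻¹ • p := by
  rw [le_inv_smul_iff_of_pos hγ]
  calc γ • s ≤ star a * p * a + γ • 1 + γ • s :=
        le_add_of_nonneg_left (add_nonneg (star_left_conjugate_nonneg hp a)
          (smul_nonneg hγ.le zero_le_one))
    _ = star a * p * a + γ • (1 + s) := by rw [smul_add, add_assoc]
    _ ≤ p := h

end StarOrderedAlgebra

namespace Matrix

variable {m n : Type*} [Fintype m] [Fintype n]

theorem abs_le_sqrt_trace_transpose_mul_self (M : Matrix m n ℝ) (i : m) (j : n) :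
    |M i j| ≤ √(Mᵀ * M).trace := by
  refine Real.abs_le_sqrt ?_
  calc M i j ^ 2 ≤ ∑ i', M i' j ^ 2 :=
        single_le_sum (f := fun i' => M i' j ^ 2) (fun _ _ => sq_nonneg _) (mem_univ i)
    _ = (Mᵀ * M) j j := by simp only [mul_apply, transpose_apply, sq]
    _ ≤ (Mᵀ * M).trace :=
        single_le_sum (f := (Mᵀ * M).diag)
          (fun _ _ => (posSemidef_conjTranspose_mul_self M).diag_nonneg) (mem_univ j)

theorem tendsto_zero_of_sum_transpose_mul_self_le {G : ℕ → Matrix m n ℝ} {B : Matrix n n ℝ}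
    (hB : ∀ t, ∑ s ∈ range t, (G s)ᵀ * G s ≤ B) : Tendsto G atTop (𝓝 0) := by
  have hsum : Summable fun t => ((G t)ᵀ * G t).trace := by
    refine summable_of_sum_range_le (c := B.trace)
      (fun t => (posSemidef_conjTranspose_mul_self (G t)).trace_nonneg) fun t => ?_
    rw [← trace_sum, ← sub_nonneg, ← trace_sub]
    exact (le_iff.mp (hB t)).trace_nonneg
  have hsqrt : Tendsto (fun t => √((G t)ᵀ * G t).trace) atTop (𝓝 0) := by
    simpa using hsum.tendsto_atTop_zero.sqrt
  exact tendsto_pi_nhds.2 fun i => tendsto_pi_nhds.2 fun j =>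
    squeeze_zero_norm (fun t => abs_le_sqrt_trace_transpose_mul_self (G t) i j) hsqrt

end Matrix

/-- If `P ≻ 0` and `P ⪰ F_tᵀ P F_t + γ I` for all `t` (with `γ > 0`), then the products
`G_t = F_t ⋯ F_0` satisfy `P ⪰ G_tᵀ P G_t + γ (I + ∑_{s<t} G_sᵀ G_s)` for `t ≥ 1`;
hence the partial sums `∑_{s<t} G_sᵀ G_s` are bounded by `γ⁻¹ P` in the Loewner order,
`G_tᵀ G_t → 0`, and `G_t x₀ → 0` for every `x₀`. -/
theorem stmt12 {n : ℕ} (P : Matrix (Fin n) (Fin n) ℝ) (hP : P.PosDef)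
    (γ : ℝ) (hγ : 0 < γ) (F G : ℕ → Matrix (Fin n) (Fin n) ℝ)
    (hLyap : ∀ t, (P - (F t)ᵀ * P * F t - γ • (1 : Matrix (Fin n) (Fin n) ℝ)).PosSemidef)
    (hG0 : G 0 = F 0) (hGs : ∀ t, G (t + 1) = F (t + 1) * G t) :
    (∀ t : ℕ, 1 ≤ t →
      (P - (G t)ᵀ * P * G t
        - γ • ((1 : Matrix (Fin n) (Fin n) ℝ)
          + ∑ s ∈ Finset.range t, (G s)ᵀ * G s)).PosSemidef) ∧
    (∀ t : ℕ, (γ⁻¹ • P - ∑ s ∈ Finset.range t, (G s)ᵀ * G s).PosSemidef) ∧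
    Filter.Tendsto (fun t => (G t)ᵀ * G t) Filter.atTop (nhds 0) ∧
    ∀ x₀ : Fin n → ℝ, Filter.Tendsto (fun t => G t *ᵥ x₀) Filter.atTop (nhds 0) := by
  have hF : ∀ t, star (F t) * P * F t + γ • 1 ≤ P := fun t => by
    rw [le_iff, ← sub_sub]
    -- over `ℝ`, `star M = Mᴴ` unfolds to `Mᵀ`
    exact hLyap t
  have hdecay := star_mul_mul_add_smul_one_add_sum_le hF hG0 hGs
  have hbound : ∀ t, ∑ s ∈ range t, (G s)ᵀ * G s ≤ γ⁻¹ • P := fun t =>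
    le_inv_smul_of_star_mul_mul_add_smul_one_add_le hP.posSemidef.nonneg hγ (hdecay t)
  have hG : Tendsto G atTop (𝓝 0) := tendsto_zero_of_sum_transpose_mul_self_le hbound
  refine ⟨fun t _ => ?_, fun t => le_iff.mp (hbound t), ?_, fun x₀ => ?_⟩
  · rw [sub_sub]
    exact le_iff.mp (hdecay t)
  · exact ((continuous_id.matrix_transpose.matrix_mul continuous_id).tendsto' 0 0
      (by simp)).comp hG
  · exact ((continuous_id.matrix_mulVec continuous_const).tendsto' 0 0 (by simp)).comp hG
end

section
/- Let N be a positive integer and for k = 1,…,N let P_k be symmetric positive definite ñ×ñ matrices, F_k ∈ ℝ^{ñ×ñ}, G ∈ ℝ^{ñ×ñ}, and β ∈ (0,1), such that the 2ñ×2ñ block matrices [[β² P_k, F_kᵀ G], [Gᵀ F_k, Gᵀ + G − P_k]] are positive semidefinite for all k. Then for any convex-combination weights w ∈ ℝ^N (w_k ≥ 0, ∑ w_k = 1), writing P(w) := ∑_k w_k P_k and F(w) := ∑_k w_k F_k, one has β² P(w) ⪰ F(w)ᵀ P(w) F(w). -/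
/-!
Because the slack variable `G` is shared by all vertices, the extended LMI is affine in the pair
`(P, F)`, so it survives convex combinations. At any point of the simplex the congruence by
`[I; -F]` then eliminates `G` and leaves exactly `β² P - Fᵀ P F`.
-/

open Matrix

namespace Matrix

variable {ι l m n o α : Type*}

theorem sum_fromBlocks [AddCommMonoid α] (s : Finset ι) (A : ι → Matrix n l α)
    (B : ι → Matrix n m α) (C : ι → Matrix o l α) (D : ι → Matrix o m α) :
    ∑ k ∈ s, fromBlocks (A k) (B k) (C k) (D k)
      = fromBlocks (∑ k ∈ s, A k) (∑ k ∈ s, B k) (∑ k ∈ s, C k) (∑ k ∈ s, D k) := by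
  ext (i | i) (j | j) <;> simp [sum_apply]

def extendedLMI [Fintype n] (c : ℝ) (P F G : Matrix n n ℝ) : Matrix (n ⊕ n) (n ⊕ n) ℝ :=
  fromBlocks (c • P) (Fᵀ * G) (Gᵀ * F) (Gᵀ + G - P)

theorem sum_smul_extendedLMI [Fintype n] {s : Finset ι} {w : ι → ℝ} (hw : ∑ k ∈ s, w k = 1)
    (c : ℝ) (P F : ι → Matrix n n ℝ) (G : Matrix n n ℝ) :
    ∑ k ∈ s, w k • extendedLMI c (P k) (F k) G
      = extendedLMI c (∑ k ∈ s, w k • P k) (∑ k ∈ s, w k • F k) G := by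
  simp only [extendedLMI, fromBlocks_smul, sum_fromBlocks]
  congr 1
  · rw [Finset.smul_sum]
    exact Finset.sum_congr rfl fun k _ => smul_comm _ _ _
  · rw [transpose_sum, Finset.sum_mul]
    exact Finset.sum_congr rfl fun k _ => by rw [transpose_smul, smul_mul_assoc]
  · rw [Finset.mul_sum]
    exact Finset.sum_congr rfl fun k _ => (mul_smul_comm _ _ _).symm
  · simp only [smul_sub, Finset.sum_sub_distrib, ← Finset.sum_smul, hw, one_smul]

theorem conjTranspose_fromRows_one_neg_mul_extendedLMI [Fintype n] [DecidableEq n] (c : ℝ)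
    (P F G : Matrix n n ℝ) :
    (fromRows (1 : Matrix n n ℝ) (-F))ᴴ * extendedLMI c P F G * fromRows (1 : Matrix n n ℝ) (-F)
      = c • P - Fᵀ * P * F := by
  rw [conjTranspose_fromRows_eq_fromCols_conjTranspose, conjTranspose_one, conjTranspose_neg,
    conjTranspose_eq_transpose_of_trivial, Matrix.mul_assoc, extendedLMI,
    fromBlocks_mul_fromRows, fromCols_mul_fromRows]
  simp only [mul_one, one_mul, mul_neg, neg_mul, mul_add, mul_sub, add_mul, sub_mul, mul_assoc]
  abel

theorem PosSemidef.smul_sub_transpose_mul_mul_of_extendedLMI [Fintype n] [DecidableEq n]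
    {c : ℝ} {P F G : Matrix n n ℝ} (h : (extendedLMI c P F G).PosSemidef) :
    (c • P - Fᵀ * P * F).PosSemidef := by
  simpa only [conjTranspose_fromRows_one_neg_mul_extendedLMI] using
    h.conjTranspose_mul_mul_same (fromRows (1 : Matrix n n ℝ) (-F))

end Matrix

theorem stmt13_general {d N : ℕ} (P F : Fin N → Matrix (Fin d) (Fin d) ℝ)
    (G : Matrix (Fin d) (Fin d) ℝ) (β : ℝ)
    (hLMI : ∀ k, (Matrix.fromBlocks (β ^ 2 • P k) ((F k)ᵀ * G)
      (Gᵀ * F k) (Gᵀ + G - P k)).PosSemidef)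
    (w : Fin N → ℝ) (hw0 : ∀ k, 0 ≤ w k) (hw1 : ∑ k, w k = 1) :
    (β ^ 2 • (∑ k, w k • P k)
      - (∑ k, w k • F k)ᵀ * (∑ k, w k • P k) * (∑ k, w k • F k)).PosSemidef := by
  apply PosSemidef.smul_sub_transpose_mul_mul_of_extendedLMI (G := G)
  rw [← sum_smul_extendedLMI hw1]
  exact posSemidef_sum _ fun k _ => (hLMI k).smul (hw0 k)

/-- de Oliveira–Bernussou–Geromel: if the block matrices
`[[β² P_k, F_kᵀ G], [Gᵀ F_k, Gᵀ + G − P_k]]` are PSD for all `k` with `P_k ≻ 0`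
symmetric and `β ∈ (0,1)`, then for any simplex weights `w`, writing
`P(w) = ∑ w_k P_k` and `F(w) = ∑ w_k F_k`, one has `β² P(w) ⪰ F(w)ᵀ P(w) F(w)`. -/
theorem stmt13 {d N : ℕ} (P F : Fin N → Matrix (Fin d) (Fin d) ℝ)
    (G : Matrix (Fin d) (Fin d) ℝ) (β : ℝ) (hβ : β ∈ Set.Ioo (0 : ℝ) 1)
    (hP : ∀ k, (P k).PosDef)
    (hLMI : ∀ k, (Matrix.fromBlocks (β ^ 2 • P k) ((F k)ᵀ * G)
      (Gᵀ * F k) (Gᵀ + G - P k)).PosSemidef)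
    (w : Fin N → ℝ) (hw0 : ∀ k, 0 ≤ w k) (hw1 : ∑ k, w k = 1) :
    (β ^ 2 • (∑ k, w k • P k)
      - (∑ k, w k • F k)ᵀ * (∑ k, w k • P k) * (∑ k, w k • F k)).PosSemidef :=
  stmt13_general P F G β hLMI w hw0 hw1
end

section
/- For any invertible real n×n matrix H, the elimination–duplication compressed Kronecker square satisfies (L (H ⊗ H) D)⁻¹ = L (H⁻¹ ⊗ H⁻¹) D, where L is the elimination matrix (vech = L · vec on arbitrary n×n matrices) and D is the duplication matrix (vec = D · vech on symmetric matrices). -/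
open Matrix Kronecker

/-!
Since `vec (A S Aᵀ) = (A ⊗ A) vec S` and congruence preserves symmetry, the compressed
Kronecker square `A ↦ L (A ⊗ A) D` acts on `vech S` as `S ↦ A S Aᵀ` on symmetric `S`.
Every vector on lower-triangular positions is `vech S` for a symmetric `S`, so this map is
multiplicative and sends `1` to `1`; hence it sends `H⁻¹` to the inverse of the image of `H`.
-/

namespace Matrix

variable {m R : Type*}

theorem IsSymm.mul_mul_transpose [Fintype m] [CommSemiring R] {S : Matrix m m R}
    (hS : S.IsSymm) (A : Matrix m m R) : (A * S * Aᵀ).IsSymm := by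
  rw [IsSymm, transpose_mul, transpose_mul, transpose_transpose, hS.eq, Matrix.mul_assoc]

section LowerTriangular

variable [LinearOrder m]

def vech (S : Matrix m m R) : {p : m × m // p.2 ≤ p.1} → R :=
  fun p => S p.1.1 p.1.2

def symmOfVech (x : {p : m × m // p.2 ≤ p.1} → R) : Matrix m m R :=
  of fun i j => x ⟨(max i j, min i j), min_le_max⟩

theorem isSymm_symmOfVech (x : {p : m × m // p.2 ≤ p.1} → R) : (symmOfVech x).IsSymm :=
  IsSymm.ext fun i j => by simp only [symmOfVech, of_apply, max_comm, min_comm]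

theorem vech_symmOfVech (x : {p : m × m // p.2 ≤ p.1} → R) : vech (symmOfVech x) = x := by
  funext ⟨⟨i, j⟩, hji⟩
  simp only [vech, symmOfVech, of_apply, max_eq_left hji, min_eq_right hji]

variable [Fintype m] [CommSemiring R]

theorem ext_of_mulVec_vech {ι : Type*} {M N : Matrix ι {p : m × m // p.2 ≤ p.1} R}
    (h : ∀ S : Matrix m m R, S.IsSymm → M *ᵥ vech S = N *ᵥ vech S) : M = N :=
  ext_iff_mulVec.2 fun x => by
    simpa only [vech_symmOfVech] using h _ (isSymm_symmOfVech x)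

variable (L : Matrix {p : m × m // p.2 ≤ p.1} (m × m) R)
  (D : Matrix (m × m) {p : m × m // p.2 ≤ p.1} R)

def compressedKronecker (A : Matrix m m R) :
    Matrix {p : m × m // p.2 ≤ p.1} {p : m × m // p.2 ≤ p.1} R :=
  L * (A ⊗ₖ A) * D

variable {L D} (hL : ∀ X : Matrix m m R, L *ᵥ vec X = vech X)
  (hD : ∀ S : Matrix m m R, S.IsSymm → D *ᵥ vech S = vec S)
include hL hD

theorem compressedKronecker_mulVec_vech (A : Matrix m m R) {S : Matrix m m R}
    (hS : S.IsSymm) : compressedKronecker L D A *ᵥ vech S = vech (A * S * Aᵀ) := by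
  rw [compressedKronecker, ← mulVec_mulVec, ← mulVec_mulVec, hD S hS, kronecker_mulVec_vec, hL]

theorem compressedKronecker_mul (A B : Matrix m m R) :
    compressedKronecker L D A * compressedKronecker L D B = compressedKronecker L D (A * B) :=
  ext_of_mulVec_vech fun S hS => by
    rw [← mulVec_mulVec, compressedKronecker_mulVec_vech hL hD B hS,
      compressedKronecker_mulVec_vech hL hD A (hS.mul_mul_transpose B),
      compressedKronecker_mulVec_vech hL hD (A * B) hS, transpose_mul]
    simp only [Matrix.mul_assoc]

theorem compressedKronecker_one [DecidableEq m] : compressedKronecker L D (1 : Matrix m m R) = 1 :=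
  ext_of_mulVec_vech fun S hS => by
    rw [compressedKronecker_mulVec_vech hL hD 1 hS, one_mulVec, transpose_one, Matrix.one_mul,
      Matrix.mul_one]

end LowerTriangular

end Matrix

/-- For invertible `H`, `(L (H ⊗ H) D)⁻¹ = L (H⁻¹ ⊗ H⁻¹) D`, where `L` is the
elimination matrix (`L · vec X = vech X` for all `X`) and `D` the duplication matrix
(`D · vech S = vec S` for symmetric `S`).  Here `vec X` is indexed by pairs
`(column, row)` with `vec X (j, i) = X i j`, and `vech` is indexed by lower-triangular
positions `(row, col)` with `col ≤ row`. -/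
theorem stmt15 {n : ℕ}
    (L : Matrix {p : Fin n × Fin n // p.2 ≤ p.1} (Fin n × Fin n) ℝ)
    (D : Matrix (Fin n × Fin n) {p : Fin n × Fin n // p.2 ≤ p.1} ℝ)
    (hL : ∀ X : Matrix (Fin n) (Fin n) ℝ,
      (L *ᵥ fun q : Fin n × Fin n => X q.2 q.1)
        = fun p : {p : Fin n × Fin n // p.2 ≤ p.1} => X p.1.1 p.1.2)
    (hD : ∀ S : Matrix (Fin n) (Fin n) ℝ, S.IsSymm →
      (D *ᵥ fun p : {p : Fin n × Fin n // p.2 ≤ p.1} => S p.1.1 p.1.2)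
        = fun q : Fin n × Fin n => S q.2 q.1)
    (H : Matrix (Fin n) (Fin n) ℝ) (hH : IsUnit H.det) :
    (L * (H ⊗ₖ H) * D)⁻¹ = L * (H⁻¹ ⊗ₖ H⁻¹) * D := by
  change (compressedKronecker L D H)⁻¹ = compressedKronecker L D H⁻¹
  refine inv_eq_right_inv ?_
  rw [compressedKronecker_mul hL hD, mul_nonsing_inv H hH, compressedKronecker_one hL hD]
end
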